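/- arXiv:2311.01264 — 5 statements merged into one kernel-verified Lean document; each statement's English description precedes it below -/
import Mathlib

section
/- Let d ≥ 1 and let ρ > 0, α > 0, c₀ > 0 be real constants. Let K be a symmetric positive definite d×d real matrix, and let S be a linear map on d×d real matrices for which there exists c_S > 0 with ∑_{i,j} (Sσ)_{ij} σ_{ij} ≥ c_S ∑_{i,j} σ_{ij}² for every symmetric d×d matrix σ. Then there exist ν₀ > 0 and γ > 0 such that for every ν ≥ ν₀ and every v ∈ ℝ^d, every symmetric d×d real matrix σ, every p ∈ ℝ and every q̄ ∈ ℝ^d: ν(ρ‖v‖² + ∑_{i,j}(Sσ)_{ij}σ_{ij} + c₀ p²) − α²⟨K⁻¹v, v⟩ − 2α⟨K⁻¹v, q̄⟩ + ⟨K⁻¹q̄, q̄⟩ ≥ γ(‖v‖² + ∑_{i,j}σ_{ij}² + p² + ‖q̄‖²). -/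
/-!
For ν large the term `ν M₀` dominates everything except `q̄`, so the point is coercivity in `q̄` of
the `(v, q̄)` block. With `A = K⁻¹`, Cauchy–Schwarz for the form `⟨A·, ·⟩` and Young's inequality
give `-α²⟨Av, v⟩ - 2α⟨Av, q̄⟩ + ⟨Aq̄, q̄⟩ ≥ ⟨Aq̄, q̄⟩/2 - 3α²⟨Av, v⟩`. The first term is coercive:
writing `q̄ = K(Aq̄)`, Cauchy–Schwarz for `K` gives `q̄ᵢ² ≤ Kᵢᵢ ⟨Aq̄, q̄⟩`, hence
`‖q̄‖² ≤ tr K · ⟨Aq̄, q̄⟩`. The second is bounded by a multiple of `‖v‖²`, which `νρ‖v‖²` absorbs.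
-/

namespace Matrix

variable {n : Type*} [Fintype n]

theorem IsSymm.mulVec_dotProduct_comm {R : Type*} [CommSemiring R] {M : Matrix n n R}
    (hM : M.IsSymm) (x y : n → R) : M *ᵥ x ⬝ᵥ y = M *ᵥ y ⬝ᵥ x := by
  rw [dotProduct_comm, dotProduct_mulVec, ← hM.eq, vecMul_transpose, hM.eq]

theorem PosSemidef.mulVec_dotProduct_self_nonneg {M : Matrix n n ℝ} (hM : M.PosSemidef)
    (x : n → ℝ) : 0 ≤ M *ᵥ x ⬝ᵥ x := by
  simpa [dotProduct_comm] using hM.dotProduct_mulVec_nonneg x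

theorem PosSemidef.mulVec_dotProduct_sq_le {M : Matrix n n ℝ} (hM : M.PosSemidef) (x y : n → ℝ) :
    (M *ᵥ x ⬝ᵥ y) ^ 2 ≤ (M *ᵥ x ⬝ᵥ x) * (M *ᵥ y ⬝ᵥ y) := by
  have hquad : ∀ t : ℝ,
      0 ≤ (M *ᵥ y ⬝ᵥ y) * (t * t) + 2 * (M *ᵥ x ⬝ᵥ y) * t + (M *ᵥ x ⬝ᵥ x) := by
    intro t
    have hsymm : M.IsSymm := isHermitian_iff_isSymm.mp hM.isHermitian
    have h := hM.mulVec_dotProduct_self_nonneg (x + t • y)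
    simp only [mulVec_add, mulVec_smul, add_dotProduct, dotProduct_add, smul_dotProduct,
      dotProduct_smul, smul_eq_mul, hsymm.mulVec_dotProduct_comm y x] at h
    linarith
  have hdiscrim := discrim_le_zero hquad
  rw [discrim] at hdiscrim
  linarith

theorem PosSemidef.two_mul_mulVec_dotProduct_le {M : Matrix n n ℝ} (hM : M.PosSemidef) (α : ℝ)
    (v q : n → ℝ) :
    2 * α * (M *ᵥ v ⬝ᵥ q) ≤ 2 * α ^ 2 * (M *ᵥ v ⬝ᵥ v) + (M *ᵥ q ⬝ᵥ q) / 2 := by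
  have hv := hM.mulVec_dotProduct_self_nonneg v
  have hq := hM.mulVec_dotProduct_self_nonneg q
  have hCS := hM.mulVec_dotProduct_sq_le v q
  refine le_of_sq_le_sq ?_ (by positivity)
  nlinarith [sq_nonneg (2 * α ^ 2 * (M *ᵥ v ⬝ᵥ v) - (M *ᵥ q ⬝ᵥ q) / 2), sq_nonneg α]

theorem mulVec_dotProduct_self_le (A : Matrix n n ℝ) (x : n → ℝ) :
    A *ᵥ x ⬝ᵥ x ≤ (∑ i, ∑ j, |A i j|) * ∑ i, x i ^ 2 := by
  have hsq : ∀ k, x k ^ 2 ≤ ∑ i, x i ^ 2 := fun k =>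
    Finset.single_le_sum (fun i _ => sq_nonneg (x i)) (Finset.mem_univ k)
  simp only [dotProduct, mulVec, Finset.sum_mul]
  refine Finset.sum_le_sum fun i _ => Finset.sum_le_sum fun j _ => ?_
  have hprod : |x j * x i| ≤ ∑ k, x k ^ 2 := by
    rw [abs_mul]
    nlinarith [sq_nonneg (|x j| - |x i|), sq_abs (x j), sq_abs (x i), hsq i, hsq j]
  calc A i j * x j * x i ≤ |A i j| * |x j * x i| := by
        rw [mul_assoc, ← abs_mul]; exact le_abs_self _
    _ ≤ |A i j| * ∑ k, x k ^ 2 := mul_le_mul_of_nonneg_left hprod (abs_nonneg _)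

variable [DecidableEq n] {K : Matrix n n ℝ}

theorem PosDef.sum_sq_le_trace_mul_inv_mulVec_dotProduct (hK : K.PosDef) (w : n → ℝ) :
    ∑ i, w i ^ 2 ≤ K.trace * (K⁻¹ *ᵥ w ⬝ᵥ w) := by
  set u := K⁻¹ *ᵥ w
  have hKu : K *ᵥ u = w := by
    rw [mulVec_mulVec, mul_nonsing_inv _ ((isUnit_iff_isUnit_det K).mp hK.isUnit), one_mulVec]
  have hcoord : ∀ i, w i ^ 2 ≤ K i i * (u ⬝ᵥ w) := by
    intro i
    have h := hK.posSemidef.mulVec_dotProduct_sq_le u (Pi.single i 1)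
    rwa [hKu, dotProduct_single, mul_one, dotProduct_comm w u, mulVec_single_one,
      dotProduct_single, mul_one, mul_comm] at h
  calc ∑ i, w i ^ 2 ≤ ∑ i, K i i * (u ⬝ᵥ w) := Finset.sum_le_sum fun i _ => hcoord i
    _ = K.trace * (u ⬝ᵥ w) := by rw [← Finset.sum_mul]; rfl

theorem PosDef.le_inv_mulVec_coupling (hK : K.PosDef) (α : ℝ) (v q : n → ℝ) :
    (2 * K.trace)⁻¹ * ∑ i, q i ^ 2 - 3 * α ^ 2 * (∑ i, ∑ j, |K⁻¹ i j|) * ∑ i, v i ^ 2 ≤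
      -α ^ 2 * (K⁻¹ *ᵥ v ⬝ᵥ v) - 2 * α * (K⁻¹ *ᵥ v ⬝ᵥ q) + (K⁻¹ *ᵥ q ⬝ᵥ q) := by
  have hYoung := hK.inv.posSemidef.two_mul_mulVec_dotProduct_le α v q
  have hq : (2 * K.trace)⁻¹ * ∑ i, q i ^ 2 ≤ (K⁻¹ *ᵥ q ⬝ᵥ q) / 2 := by
    rcases (hK.posSemidef.trace_nonneg).eq_or_lt with htrace | htrace
    · rw [← htrace, mul_zero, _root_.inv_zero, zero_mul]
      linarith [hK.inv.posSemidef.mulVec_dotProduct_self_nonneg q]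
    rw [inv_mul_le_iff₀ (by positivity)]
    linarith [hK.sum_sq_le_trace_mul_inv_mulVec_dotProduct q]
  have hv : 3 * α ^ 2 * (K⁻¹ *ᵥ v ⬝ᵥ v) ≤
      3 * α ^ 2 * ((∑ i, ∑ j, |K⁻¹ i j|) * ∑ i, v i ^ 2) :=
    mul_le_mul_of_nonneg_left (mulVec_dotProduct_self_le _ v) (by positivity)
  linarith

end Matrix

theorem stmt_0_general (d : ℕ) (hd : 1 ≤ d) (ρ α c₀ : ℝ) (hρ : 0 < ρ) (hc₀ : 0 < c₀)
    (K : Matrix (Fin d) (Fin d) ℝ) (hK : K.PosDef)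
    (S : Matrix (Fin d) (Fin d) ℝ →ₗ[ℝ] Matrix (Fin d) (Fin d) ℝ)
    (hS : ∃ cS > (0:ℝ), ∀ σ : Matrix (Fin d) (Fin d) ℝ, σ.IsSymm →
      cS * (∑ i, ∑ j, σ i j ^ 2) ≤ ∑ i, ∑ j, S σ i j * σ i j) :
    ∃ ν₀ > (0:ℝ), ∃ γ > (0:ℝ), ∀ ν : ℝ, ν₀ ≤ ν →
      ∀ (v : Fin d → ℝ) (σ : Matrix (Fin d) (Fin d) ℝ) (p : ℝ) (q : Fin d → ℝ), σ.IsSymm →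
        γ * ((∑ i, v i ^ 2) + (∑ i, ∑ j, σ i j ^ 2) + p ^ 2 + (∑ i, q i ^ 2)) ≤
          ν * (ρ * (∑ i, v i ^ 2) + (∑ i, ∑ j, S σ i j * σ i j) + c₀ * p ^ 2)
            - α ^ 2 * (K⁻¹.mulVec v ⬝ᵥ v) - 2 * α * (K⁻¹.mulVec v ⬝ᵥ q)
            + (K⁻¹.mulVec q ⬝ᵥ q) := by
  obtain ⟨cS, hcS, hSσ⟩ := hS
  have : Nonempty (Fin d) := ⟨⟨0, hd⟩⟩
  have htrace := hK.trace_pos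
  set γ := (2 * K.trace)⁻¹
  set C := 3 * α ^ 2 * ∑ i, ∑ j, |K⁻¹ i j|
  refine ⟨max (max ((γ + C) / ρ) (γ / cS)) (γ / c₀), by positivity, γ, by positivity,
    fun ν hν v σ p q hσ => ?_⟩
  have hνρ : γ + C ≤ ν * ρ := (div_le_iff₀ hρ).mp (le_of_max_le_left (le_of_max_le_left hν))
  have hνS : γ ≤ ν * cS := (div_le_iff₀ hcS).mp (le_of_max_le_right (le_of_max_le_left hν))
  have hνc₀ : γ ≤ ν * c₀ := (div_le_iff₀ hc₀).mp (le_of_max_le_right hν)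
  have hν : 0 ≤ ν := (by positivity : (0:ℝ) ≤ γ / c₀).trans (le_of_max_le_right hν)
  have hcoupling := hK.le_inv_mulVec_coupling α v q
  have hvν : (γ + C) * ∑ i, v i ^ 2 ≤ ν * ρ * ∑ i, v i ^ 2 :=
    mul_le_mul_of_nonneg_right hνρ (by positivity)
  have hσν : γ * ∑ i, ∑ j, σ i j ^ 2 ≤ ν * ∑ i, ∑ j, S σ i j * σ i j :=
    calc γ * ∑ i, ∑ j, σ i j ^ 2 ≤ ν * (cS * ∑ i, ∑ j, σ i j ^ 2) := by
          rw [← mul_assoc]; exact mul_le_mul_of_nonneg_right hνS (by positivity)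
      _ ≤ ν * ∑ i, ∑ j, S σ i j * σ i j := mul_le_mul_of_nonneg_left (hSσ σ hσ) hν
  have hpν : γ * p ^ 2 ≤ ν * c₀ * p ^ 2 := mul_le_mul_of_nonneg_right hνc₀ (sq_nonneg p)
  linarith

/-- Positivity condition `⟨(νM₀+M₁)x, x⟩ ≥ γ⟨x, x⟩` for the hyperbolic-parabolic
poroelasticity system, on quadruples `x = (v, σ, p, q̄)`. -/
theorem stmt_0 (d : ℕ) (hd : 1 ≤ d) (ρ α c₀ : ℝ) (hρ : 0 < ρ) (hα : 0 < α) (hc₀ : 0 < c₀)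
    (K : Matrix (Fin d) (Fin d) ℝ) (hK : K.PosDef)
    (S : Matrix (Fin d) (Fin d) ℝ →ₗ[ℝ] Matrix (Fin d) (Fin d) ℝ)
    (hS : ∃ cS > (0:ℝ), ∀ σ : Matrix (Fin d) (Fin d) ℝ, σ.IsSymm →
      cS * (∑ i, ∑ j, σ i j ^ 2) ≤ ∑ i, ∑ j, S σ i j * σ i j) :
    ∃ ν₀ > (0:ℝ), ∃ γ > (0:ℝ), ∀ ν : ℝ, ν₀ ≤ ν →
      ∀ (v : Fin d → ℝ) (σ : Matrix (Fin d) (Fin d) ℝ) (p : ℝ) (q : Fin d → ℝ), σ.IsSymm →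
        γ * ((∑ i, v i ^ 2) + (∑ i, ∑ j, σ i j ^ 2) + p ^ 2 + (∑ i, q i ^ 2)) ≤
          ν * (ρ * (∑ i, v i ^ 2) + (∑ i, ∑ j, S σ i j * σ i j) + c₀ * p ^ 2)
            - α ^ 2 * (K⁻¹.mulVec v ⬝ᵥ v) - 2 * α * (K⁻¹.mulVec v ⬝ᵥ q)
            + (K⁻¹.mulVec q ⬝ᵥ q) :=
  stmt_0_general d hd ρ α c₀ hρ hc₀ K hK S hS
end

section
/- Let H be a real Hilbert space and let M₀, M₁ : H → H be bounded linear operators with M₀ selfadjoint and ⟨M₀x, x⟩ ≥ 0 for all x ∈ H. Let ν > 0 and γ > 0 satisfy ⟨(νM₀ + M₁)x, x⟩ ≥ γ‖x‖² for all x ∈ H. Then for all real numbers a < b and every continuously differentiable v : ℝ → H: ∫_a^b ⟨M₀ v'(t) + M₁ v(t), v(t)⟩ e^{−2ν(t−a)} dt ≥ γ ∫_a^b ‖v(t)‖² e^{−2ν(t−a)} dt + (1/2) e^{−2ν(b−a)} ⟨M₀ v(b), v(b)⟩ − (1/2) ⟨M₀ v(a), v(a)⟩. -/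
/-!
Write `M₀ v' + M₁ v = (M₀ v' - νM₀ v) + (νM₀ + M₁) v` in the integrand. Since `M₀` is symmetric,
`(e^{-2ν(t-a)} ⟪M₀ v, v⟫ / 2)' = (⟪M₀ v', v⟫ - ν ⟪M₀ v, v⟫) e^{-2ν(t-a)}`, so the first part
integrates exactly to the boundary terms, and the coercivity of `νM₀ + M₁` bounds the second
part from below pointwise.
-/

open scoped RealInnerProductSpace

section

variable {H : Type*} [NormedAddCommGroup H] [InnerProductSpace ℝ H]

theorem HasDerivAt.inner_map_self_of_isSymmetric {M : H →L[ℝ] H}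
    (hM : (M : H →ₗ[ℝ] H).IsSymmetric) {v : ℝ → H} {v' : H} {t : ℝ} (hv : HasDerivAt v v' t) :
    HasDerivAt (fun s => ⟪M (v s), v s⟫) (2 * ⟪M v', v t⟫) t := by
  have h := (M.hasFDerivAt.comp_hasDerivAt t hv).inner ℝ hv
  refine h.congr_deriv ?_
  rw [Function.comp_apply,
    show ⟪M (v t), v'⟫ = ⟪M v', v t⟫ from (hM (v t) v').trans (real_inner_comm _ _)]
  ring

theorem hasDerivAt_exp_mul_inner_map_self {M : H →L[ℝ] H}
    (hM : (M : H →ₗ[ℝ] H).IsSymmetric) (ν a : ℝ) {v : ℝ → H} {v' : H} {t : ℝ}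
    (hv : HasDerivAt v v' t) :
    HasDerivAt (fun s => Real.exp (-2 * ν * (s - a)) * ⟪M (v s), v s⟫ / 2)
      ((⟪M v', v t⟫ - ν * ⟪M (v t), v t⟫) * Real.exp (-2 * ν * (t - a))) t := by
  have hexp : HasDerivAt (fun s => Real.exp (-2 * ν * (s - a)))
      (Real.exp (-2 * ν * (t - a)) * (-2 * ν)) t := by
    simpa using (((hasDerivAt_id t).sub_const a).const_mul (-2 * ν)).exp
  refine ((hexp.mul (hv.inner_map_self_of_isSymmetric hM)).div_const 2).congr_deriv ?_
  ring

theorem integral_inner_map_deriv_sub_mul_exp {M : H →L[ℝ] H}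
    (hM : (M : H →ₗ[ℝ] H).IsSymmetric) (ν a b : ℝ) {v : ℝ → H} (hv : ContDiff ℝ 1 v) :
    ∫ t in a..b, (⟪M (deriv v t), v t⟫ - ν * ⟪M (v t), v t⟫) * Real.exp (-2 * ν * (t - a))
      = (1/2) * Real.exp (-2 * ν * (b - a)) * ⟪M (v b), v b⟫ - (1/2) * ⟪M (v a), v a⟫ := by
  have hderiv : ∀ t, HasDerivAt v (deriv v t) t := fun t =>
    ((hv.differentiable one_ne_zero) t).hasDerivAt
  have hcont : Continuous fun t =>
      (⟪M (deriv v t), v t⟫ - ν * ⟪M (v t), v t⟫) * Real.exp (-2 * ν * (t - a)) := by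
    have := hv.continuous_deriv le_rfl
    have := hv.continuous
    fun_prop
  rw [intervalIntegral.integral_eq_sub_of_hasDerivAt
    (fun t _ => hasDerivAt_exp_mul_inner_map_self hM ν a (hderiv t))
    (hcont.intervalIntegrable a b)]
  simp only [sub_self, mul_zero, Real.exp_zero]
  ring

theorem mul_integral_norm_sq_mul_le_integral_inner_mul {A : H →L[ℝ] H} {γ : ℝ}
    (hA : ∀ x, γ * ‖x‖ ^ 2 ≤ ⟪A x, x⟫) {a b : ℝ} (hab : a ≤ b) {v : ℝ → H} {w : ℝ → ℝ}
    (hv : Continuous v) (hw : Continuous w) (hw₀ : ∀ t ∈ Set.Icc a b, 0 ≤ w t) :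
    γ * ∫ t in a..b, ‖v t‖ ^ 2 * w t ≤ ∫ t in a..b, ⟪A (v t), v t⟫ * w t := by
  rw [← intervalIntegral.integral_const_mul]
  refine intervalIntegral.integral_mono_on hab
    ((by fun_prop : Continuous _).intervalIntegrable _ _)
    ((by fun_prop : Continuous _).intervalIntegrable _ _) fun t ht => ?_
  rw [← mul_assoc]
  exact mul_le_mul_of_nonneg_right (hA (v t)) (hw₀ t ht)

end

theorem stmt_4_general {H : Type*} [NormedAddCommGroup H] [InnerProductSpace ℝ H]
    (M₀ M₁ : H →L[ℝ] H)
    (hM₀sym : ∀ x y : H, ⟪M₀ x, y⟫ = ⟪x, M₀ y⟫)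
    (ν γ : ℝ)
    (hcoer : ∀ x : H, γ * ‖x‖ ^ 2 ≤ ⟪(ν • M₀ + M₁) x, x⟫)
    (a b : ℝ) (hab : a < b) (v : ℝ → H) (hv : ContDiff ℝ 1 v) :
    γ * (∫ t in a..b, ‖v t‖ ^ 2 * Real.exp (-2 * ν * (t - a)))
        + (1/2) * Real.exp (-2 * ν * (b - a)) * ⟪M₀ (v b), v b⟫
        - (1/2) * ⟪M₀ (v a), v a⟫ ≤
      ∫ t in a..b, ⟪M₀ (deriv v t) + M₁ (v t), v t⟫ * Real.exp (-2 * ν * (t - a)) := by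
  have hvc := hv.continuous
  have hv'c := hv.continuous_deriv le_rfl
  have hsplit : (∫ t in a..b, ⟪M₀ (deriv v t) + M₁ (v t), v t⟫ * Real.exp (-2 * ν * (t - a)))
      = (∫ t in a..b, (⟪M₀ (deriv v t), v t⟫ - ν * ⟪M₀ (v t), v t⟫) * Real.exp (-2 * ν * (t - a)))
        + ∫ t in a..b, ⟪(ν • M₀ + M₁) (v t), v t⟫ * Real.exp (-2 * ν * (t - a)) := by
    rw [← intervalIntegral.integral_add
      ((by fun_prop : Continuous _).intervalIntegrable _ _)
      ((by fun_prop : Continuous _).intervalIntegrable _ _)]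
    refine intervalIntegral.integral_congr fun t _ => ?_
    simp only [add_apply, smul_apply, inner_add_left, real_inner_smul_left]
    ring
  have hbound := mul_integral_norm_sq_mul_le_integral_inner_mul hcoer hab.le hvc
    (w := fun t => Real.exp (-2 * ν * (t - a))) (by fun_prop) fun t _ => (Real.exp_pos _).le
  rw [hsplit, integral_inner_map_deriv_sub_mul_exp hM₀sym ν a b hv]
  linarith

/-- Coercivity lower bound for the exponentially weighted space-time bilinear form
of `∂ₜ M₀ + M₁` on one time interval. -/
theorem stmt_4 {H : Type*} [NormedAddCommGroup H] [InnerProductSpace ℝ H] [CompleteSpace H]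
    (M₀ M₁ : H →L[ℝ] H)
    (hM₀sym : ∀ x y : H, ⟪M₀ x, y⟫ = ⟪x, M₀ y⟫)
    (hM₀pos : ∀ x : H, 0 ≤ ⟪M₀ x, x⟫)
    (ν γ : ℝ) (hν : 0 < ν) (hγ : 0 < γ)
    (hcoer : ∀ x : H, γ * ‖x‖ ^ 2 ≤ ⟪(ν • M₀ + M₁) x, x⟫)
    (a b : ℝ) (hab : a < b) (v : ℝ → H) (hv : ContDiff ℝ 1 v) :
    γ * (∫ t in a..b, ‖v t‖ ^ 2 * Real.exp (-2 * ν * (t - a)))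
        + (1/2) * Real.exp (-2 * ν * (b - a)) * ⟪M₀ (v b), v b⟫
        - (1/2) * ⟪M₀ (v a), v a⟫ ≤
      ∫ t in a..b, ⟪M₀ (deriv v t) + M₁ (v t), v t⟫ * Real.exp (-2 * ν * (t - a)) :=
  stmt_4_general M₀ M₁ hM₀sym ν γ hcoer a b hab v hv
end

section
/- Let H be a real Hilbert space and let M₀, M₁ : H → H be bounded linear operators with M₀ selfadjoint and ⟨M₀x, x⟩ ≥ 0 for all x ∈ H. Let ν > 0 and γ > 0 satisfy ⟨(νM₀ + M₁)x, x⟩ ≥ γ‖x‖² for all x ∈ H. Then for all real numbers a < b, every continuously differentiable v : ℝ → H and every v⁻ ∈ H: ∫_a^b ⟨M₀ v'(t) + M₁ v(t), v(t)⟩ e^{−2ν(t−a)} dt + ⟨M₀ (v(a) − v⁻), v(a)⟩ ≥ γ ∫_a^b ‖v(t)‖² e^{−2ν(t−a)} dt + (1/2) [ e^{−2ν(b−a)} ⟨M₀ v(b), v(b)⟩ − ⟨M₀ v⁻, v⁻⟩ + ⟨M₀ (v(a) − v⁻), v(a) − v⁻⟩ ]. -/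
/-!
Write `w t = exp (-2ν(t-a))`. Since `M₀` is symmetric, `d/dt ⟨M₀ v, v⟩ = 2⟨M₀ v', v⟩`, so
integrating by parts against `w` (with `w' = -2ν w`) turns the `M₀ v'` part of the integral into
the boundary term `½ [w ⟨M₀ v, v⟩]_a^b` plus `ν ∫ ⟨M₀ v, v⟩ w`. Together with the `M₁` part this
gives `∫ ⟨(νM₀ + M₁) v, v⟩ w ≥ γ ∫ ‖v‖² w`. The jump term is handled by the identity
`2⟨M₀(x - y), x⟩ = ⟨M₀ x, x⟩ - ⟨M₀ y, y⟩ + ⟨M₀(x - y), x - y⟩`, which cancels `⟨M₀ v(a), v(a)⟩`.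
-/

open scoped RealInnerProductSpace

section

variable {H : Type*} [NormedAddCommGroup H] [InnerProductSpace ℝ H]

namespace LinearMap.IsSymmetric

variable {T : H →L[ℝ] H} (hT : (T : H →ₗ[ℝ] H).IsSymmetric)
include hT

theorem two_mul_inner_map_sub_left (x y : H) :
    2 * ⟪T (x - y), x⟫ = ⟪T x, x⟫ - ⟪T y, y⟫ + ⟪T (x - y), x - y⟫ := by
  have hxy : ⟪T y, x⟫ = ⟪T x, y⟫ := by rw [hT.apply_clm, real_inner_comm]
  simp only [map_sub, inner_sub_left, inner_sub_right, hxy]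
  ring

theorem hasDerivAt_inner_map_self {v : ℝ → H} {v' : H} {t : ℝ} (hv : HasDerivAt v v' t) :
    HasDerivAt (fun s ↦ ⟪T (v s), v s⟫) (2 * ⟪T v', v t⟫) t := by
  refine ((T.hasFDerivAt.comp_hasDerivAt t hv).inner ℝ hv).congr_deriv ?_
  rw [Function.comp_apply, hT.apply_clm (v t), real_inner_comm]
  ring

theorem integral_inner_map_deriv_mul_exp {v : ℝ → H} (hv : ContDiff ℝ 1 v) (ν a b : ℝ) :
    ∫ t in a..b, ⟪T (deriv v t), v t⟫ * Real.exp (-2 * ν * (t - a)) =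
      (1/2) * (Real.exp (-2 * ν * (b - a)) * ⟪T (v b), v b⟫ - ⟪T (v a), v a⟫)
        + ν * ∫ t in a..b, ⟪T (v t), v t⟫ * Real.exp (-2 * ν * (t - a)) := by
  have hv₁ : Continuous v := hv.continuous
  have hv₂ : Continuous (deriv v) := hv.continuous_deriv le_rfl
  have hweight (t : ℝ) : HasDerivAt (fun s ↦ Real.exp (-2 * ν * (s - a)))
      (Real.exp (-2 * ν * (t - a)) * (-2 * ν)) t := by
    simpa using (((hasDerivAt_id t).sub_const a).const_mul (-2 * ν)).exp
  have hparts := intervalIntegral.integral_deriv_mul_eq_sub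
    (fun t _ ↦ hT.hasDerivAt_inner_map_self ((hv.differentiable one_ne_zero) t).hasDerivAt)
    (fun t _ ↦ hweight t) (a := a) (b := b)
    (Continuous.intervalIntegrable (by fun_prop) _ _)
    (Continuous.intervalIntegrable (by fun_prop) _ _)
  rw [intervalIntegral.integral_add
    (Continuous.intervalIntegrable (by fun_prop) _ _)
    (Continuous.intervalIntegrable (by fun_prop) _ _)] at hparts
  simp only [sub_self, mul_zero, Real.exp_zero, mul_one] at hparts
  have hleft : ∫ t in a..b, 2 * ⟪T (deriv v t), v t⟫ * Real.exp (-2 * ν * (t - a)) =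
      2 * ∫ t in a..b, ⟪T (deriv v t), v t⟫ * Real.exp (-2 * ν * (t - a)) := by
    simp only [mul_assoc, intervalIntegral.integral_const_mul]
  have hright : ∫ t in a..b, ⟪T (v t), v t⟫ * (Real.exp (-2 * ν * (t - a)) * (-2 * ν)) =
      -2 * ν * ∫ t in a..b, ⟪T (v t), v t⟫ * Real.exp (-2 * ν * (t - a)) := by
    rw [← intervalIntegral.integral_const_mul]
    congr 1 with t
    ring
  linarith

end LinearMap.IsSymmetric

theorem integral_mul_le_of_coercive {M₀ M₁ : H →L[ℝ] H} {ν γ : ℝ}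
    (hcoer : ∀ x : H, γ * ‖x‖ ^ 2 ≤ ⟪(ν • M₀ + M₁) x, x⟫) {a b : ℝ} (hab : a ≤ b)
    {v : ℝ → H} (hv : Continuous v) {w : ℝ → ℝ} (hw : Continuous w) (hw₀ : ∀ t, 0 ≤ w t) :
    γ * ∫ t in a..b, ‖v t‖ ^ 2 * w t ≤
      ν * (∫ t in a..b, ⟪M₀ (v t), v t⟫ * w t) + ∫ t in a..b, ⟪M₁ (v t), v t⟫ * w t := by
  rw [← intervalIntegral.integral_const_mul, ← intervalIntegral.integral_const_mul,
    ← intervalIntegral.integral_add (Continuous.intervalIntegrable (by fun_prop) _ _)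
      (Continuous.intervalIntegrable (by fun_prop) _ _)]
  refine intervalIntegral.integral_mono_on hab
    (Continuous.intervalIntegrable (by fun_prop) _ _)
    (Continuous.intervalIntegrable (by fun_prop) _ _)
    fun t _ ↦ ?_
  have hpoint := mul_le_mul_of_nonneg_right (hcoer (v t)) (hw₀ t)
  simp only [add_apply, smul_apply, inner_add_left, real_inner_smul_left] at hpoint
  linarith

end

theorem stmt_5_general {H : Type*} [NormedAddCommGroup H] [InnerProductSpace ℝ H]
    (M₀ M₁ : H →L[ℝ] H)
    (hM₀sym : ∀ x y : H, ⟪M₀ x, y⟫ = ⟪x, M₀ y⟫)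
    (ν γ : ℝ)
    (hcoer : ∀ x : H, γ * ‖x‖ ^ 2 ≤ ⟪(ν • M₀ + M₁) x, x⟫)
    (a b : ℝ) (hab : a < b) (v : ℝ → H) (hv : ContDiff ℝ 1 v) (vm : H) :
    γ * (∫ t in a..b, ‖v t‖ ^ 2 * Real.exp (-2 * ν * (t - a)))
        + (1/2) * (Real.exp (-2 * ν * (b - a)) * ⟪M₀ (v b), v b⟫
            - ⟪M₀ vm, vm⟫ + ⟪M₀ (v a - vm), v a - vm⟫) ≤
      (∫ t in a..b, ⟪M₀ (deriv v t) + M₁ (v t), v t⟫ * Real.exp (-2 * ν * (t - a)))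
        + ⟪M₀ (v a - vm), v a⟫ := by
  have hsym : (M₀ : H →ₗ[ℝ] H).IsSymmetric := hM₀sym
  have hv₁ : Continuous v := hv.continuous
  have hv₂ : Continuous (deriv v) := hv.continuous_deriv le_rfl
  have hsplit : ∫ t in a..b, ⟪M₀ (deriv v t) + M₁ (v t), v t⟫ * Real.exp (-2 * ν * (t - a)) =
      (∫ t in a..b, ⟪M₀ (deriv v t), v t⟫ * Real.exp (-2 * ν * (t - a)))
        + ∫ t in a..b, ⟪M₁ (v t), v t⟫ * Real.exp (-2 * ν * (t - a)) := by
    simp only [inner_add_left, add_mul]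
    exact intervalIntegral.integral_add
      (Continuous.intervalIntegrable (by fun_prop) _ _)
      (Continuous.intervalIntegrable (by fun_prop) _ _)
  have hcoercive := integral_mul_le_of_coercive hcoer hab.le hv₁ (by fun_prop)
    (fun t ↦ (Real.exp_pos (-2 * ν * (t - a))).le)
  rw [hsplit, hsym.integral_inner_map_deriv_mul_exp hv]
  linarith [hsym.two_mul_inner_map_sub_left (v a) vm]

/-- Coercivity lower bound, including the DG jump term `⟨M₀⟦v⟧, v⁺⟩`, for the
exponentially weighted space-time bilinear form of `∂ₜ M₀ + M₁` on `(a, b]`. -/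
theorem stmt_5 {H : Type*} [NormedAddCommGroup H] [InnerProductSpace ℝ H] [CompleteSpace H]
    (M₀ M₁ : H →L[ℝ] H)
    (hM₀sym : ∀ x y : H, ⟪M₀ x, y⟫ = ⟪x, M₀ y⟫)
    (hM₀pos : ∀ x : H, 0 ≤ ⟪M₀ x, x⟫)
    (ν γ : ℝ) (hν : 0 < ν) (hγ : 0 < γ)
    (hcoer : ∀ x : H, γ * ‖x‖ ^ 2 ≤ ⟪(ν • M₀ + M₁) x, x⟫)
    (a b : ℝ) (hab : a < b) (v : ℝ → H) (hv : ContDiff ℝ 1 v) (vm : H) :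
    γ * (∫ t in a..b, ‖v t‖ ^ 2 * Real.exp (-2 * ν * (t - a)))
        + (1/2) * (Real.exp (-2 * ν * (b - a)) * ⟪M₀ (v b), v b⟫
            - ⟪M₀ vm, vm⟫ + ⟪M₀ (v a - vm), v a - vm⟫) ≤
      (∫ t in a..b, ⟪M₀ (deriv v t) + M₁ (v t), v t⟫ * Real.exp (-2 * ν * (t - a)))
        + ⟪M₀ (v a - vm), v a⟫ :=
  stmt_5_general M₀ M₁ hM₀sym ν γ hcoer a b hab v hv vm
end

section
/- Let H be a real Hilbert space and let M₀, M₁, A : H → H be bounded linear operators with M₀ selfadjoint and ⟨Ax, x⟩ = 0 for all x ∈ H. Let ν > 0 and γ > 0 satisfy ⟨(νM₀ + M₁)x, x⟩ ≥ γ‖x‖² for all x ∈ H. Let U : ℝ → H be continuously differentiable with compact support and set F(t) := M₀ U'(t) + M₁ U(t) + A U(t). Then ∫_ℝ ‖U(t)‖² e^{−2νt} dt ≤ γ^{−2} ∫_ℝ ‖F(t)‖² e^{−2νt} dt. -/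
open MeasureTheory
open scoped RealInnerProductSpace

/-!
Pair the equation with `U` in `H_ν`. The term `⟨A U, U⟩` vanishes pointwise, and integrating
`∂ₜ (⟨M₀ U, U⟩ e^{-2νt}) = (2⟨M₀ U', U⟩ - 2ν⟨M₀ U, U⟩) e^{-2νt}` over `ℝ` (zero, by compact
support; symmetry of `M₀` gives the factor `2`) yields `⟨M₀ U', U⟩_ν = ν ⟨M₀ U, U⟩_ν`. Hence
`γ ‖U‖_ν² ≤ ⟨(ν M₀ + M₁) U, U⟩_ν = ⟨F, U⟩_ν ≤ (γ/2) ‖U‖_ν² + (2γ)⁻¹ ‖F‖_ν²`, the last step by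
Young's inequality, and absorbing `(γ/2) ‖U‖_ν²` gives the estimate.
-/

theorem HasCompactSupport.inner_right {α E : Type*} [TopologicalSpace α]
    [SeminormedAddCommGroup E] [InnerProductSpace ℝ E] {U : α → E} (hU : HasCompactSupport U)
    (V : α → E) : HasCompactSupport fun t => ⟪V t, U t⟫ :=
  hU.mono fun t ht h0 => ht (by simp [h0])

theorem integrable_mul_exp_of_hasCompactSupport {f : ℝ → ℝ} (hf : Continuous f)
    (hfc : HasCompactSupport f) (c : ℝ) : Integrable fun t => f t * Real.exp (c * t) :=
  (hf.mul (by fun_prop)).integrable_of_hasCompactSupport hfc.mul_right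

theorem real_inner_le_mul_sq_add_inv_mul_sq {E : Type*} [SeminormedAddCommGroup E]
    [InnerProductSpace ℝ E] (x y : E) {γ : ℝ} (hγ : 0 < γ) :
    ⟪x, y⟫ ≤ γ / 2 * ‖y‖ ^ 2 + (2 * γ)⁻¹ * ‖x‖ ^ 2 := by
  have hsq : 0 ≤ (γ * ‖y‖ - ‖x‖) ^ 2 / (2 * γ) := by positivity
  calc ⟪x, y⟫ ≤ ‖x‖ * ‖y‖ := real_inner_le_norm x y
    _ ≤ γ / 2 * ‖y‖ ^ 2 + (2 * γ)⁻¹ * ‖x‖ ^ 2 := by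
      field_simp at hsq ⊢
      nlinarith

section

variable {H : Type*} [NormedAddCommGroup H] [InnerProductSpace ℝ H]

theorem hasDerivAt_inner_apply_self {T : H →L[ℝ] H} (hT : (T : H →ₗ[ℝ] H).IsSymmetric)
    {U : ℝ → H} {U' : H} {t : ℝ} (hU : HasDerivAt U U' t) :
    HasDerivAt (fun s => ⟪T (U s), U s⟫) (2 * ⟪T U', U t⟫) t := by
  refine ((T.hasFDerivAt.comp_hasDerivAt t hU).inner ℝ hU).congr_deriv ?_
  have hsymm : ⟪T (U t), U'⟫ = ⟪T U', U t⟫ := by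
    rw [real_inner_comm, ← ContinuousLinearMap.coe_coe T, hT]
  simp only [Function.comp_apply, hsymm]
  ring

theorem integral_norm_sq_mul_le_of_coercive {α : Type*} [MeasurableSpace α] {μ : Measure α}
    {w : α → ℝ} (hw : ∀ t, 0 ≤ w t) {U F : α → H} {γ : ℝ} (hγ : 0 < γ)
    (hU : Integrable (fun t => ‖U t‖ ^ 2 * w t) μ) (hF : Integrable (fun t => ‖F t‖ ^ 2 * w t) μ)
    (hFU : Integrable (fun t => ⟪F t, U t⟫ * w t) μ)
    (hcoer : γ * ∫ t, ‖U t‖ ^ 2 * w t ∂μ ≤ ∫ t, ⟪F t, U t⟫ * w t ∂μ) :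
    ∫ t, ‖U t‖ ^ 2 * w t ∂μ ≤ γ⁻¹ ^ 2 * ∫ t, ‖F t‖ ^ 2 * w t ∂μ := by
  have hyoung : ∫ t, ⟪F t, U t⟫ * w t ∂μ ≤
      γ / 2 * ∫ t, ‖U t‖ ^ 2 * w t ∂μ + (2 * γ)⁻¹ * ∫ t, ‖F t‖ ^ 2 * w t ∂μ := by
    rw [← integral_const_mul, ← integral_const_mul,
      ← integral_add (hU.const_mul _) (hF.const_mul _)]
    refine integral_mono hFU ((hU.const_mul _).add (hF.const_mul _)) fun t => ?_
    have := mul_le_mul_of_nonneg_right (real_inner_le_mul_sq_add_inv_mul_sq (F t) (U t) hγ) (hw t)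
    linarith
  have hhalf : γ / 2 * ∫ t, ‖U t‖ ^ 2 * w t ∂μ ≤ (2 * γ)⁻¹ * ∫ t, ‖F t‖ ^ 2 * w t ∂μ := by
    linarith
  calc ∫ t, ‖U t‖ ^ 2 * w t ∂μ = 2 / γ * (γ / 2 * ∫ t, ‖U t‖ ^ 2 * w t ∂μ) := by field_simp
    _ ≤ 2 / γ * ((2 * γ)⁻¹ * ∫ t, ‖F t‖ ^ 2 * w t ∂μ) := by gcongr
    _ = γ⁻¹ ^ 2 * ∫ t, ‖F t‖ ^ 2 * w t ∂μ := by field_simp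

theorem integral_inner_deriv_mul_exp {T : H →L[ℝ] H} (hT : (T : H →ₗ[ℝ] H).IsSymmetric)
    {U : ℝ → H} (hU : ContDiff ℝ 1 U) (hUc : HasCompactSupport U) (ν : ℝ) :
    ∫ t, ⟪T (deriv U t), U t⟫ * Real.exp (-2 * ν * t) =
      ν * ∫ t, ⟪T (U t), U t⟫ * Real.exp (-2 * ν * t) := by
  have hUcont : Continuous U := hU.continuous
  have hint_deriv : Integrable fun t => ⟪T (deriv U t), U t⟫ * Real.exp (-2 * ν * t) :=
    integrable_mul_exp_of_hasCompactSupport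
      ((T.continuous.comp (hU.continuous_deriv le_rfl)).inner hUcont) (hUc.inner_right _) _
  have hint : Integrable fun t => ⟪T (U t), U t⟫ * Real.exp (-2 * ν * t) :=
    integrable_mul_exp_of_hasCompactSupport
      ((T.continuous.comp hUcont).inner hUcont) (hUc.inner_right _) _
  have hderiv : ∀ t, HasDerivAt (fun s => ⟪T (U s), U s⟫ * Real.exp (-2 * ν * s))
      (2 * (⟪T (deriv U t), U t⟫ * Real.exp (-2 * ν * t)) -
        2 * ν * (⟪T (U t), U t⟫ * Real.exp (-2 * ν * t))) t := by
    intro t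
    have hexp : HasDerivAt (fun s => Real.exp (-2 * ν * s)) (Real.exp (-2 * ν * t) * (-2 * ν)) t :=
      ((hasDerivAt_id t).const_mul (-2 * ν)).exp.congr_deriv (by simp)
    refine ((hasDerivAt_inner_apply_self hT
      ((hU.differentiable one_ne_zero t).hasDerivAt)).mul hexp).congr_deriv ?_
    ring
  have hzero := integral_eq_zero_of_hasDerivAt_of_integrable hderiv
    ((hint_deriv.const_mul 2).sub (hint.const_mul (2 * ν))) hint
  rw [integral_sub (hint_deriv.const_mul 2) (hint.const_mul (2 * ν)), integral_const_mul,
    integral_const_mul] at hzero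
  linarith

theorem integral_inner_evolution_mul_exp {M₀ M₁ A : H →L[ℝ] H}
    (hM₀ : (M₀ : H →ₗ[ℝ] H).IsSymmetric) (hA : ∀ x : H, ⟪A x, x⟫ = 0)
    {U : ℝ → H} (hU : ContDiff ℝ 1 U) (hUc : HasCompactSupport U) (ν : ℝ) :
    ∫ t, ⟪M₀ (deriv U t) + M₁ (U t) + A (U t), U t⟫ * Real.exp (-2 * ν * t) =
      ∫ t, ⟪(ν • M₀ + M₁) (U t), U t⟫ * Real.exp (-2 * ν * t) := by
  have hUcont : Continuous U := hU.continuous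
  have hint : ∀ {V : ℝ → H}, Continuous V →
      Integrable fun t => ⟪V t, U t⟫ * Real.exp (-2 * ν * t) := fun hV =>
    integrable_mul_exp_of_hasCompactSupport (hV.inner hUcont) (hUc.inner_right _) _
  have hM₀U' := hint (V := fun t => M₀ (deriv U t)) (by fun_prop)
  have hM₀U := hint (V := fun t => M₀ (U t)) (by fun_prop)
  have hM₁U := hint (V := fun t => M₁ (U t)) (by fun_prop)
  have hlhs : (fun t => ⟪M₀ (deriv U t) + M₁ (U t) + A (U t), U t⟫ * Real.exp (-2 * ν * t)) =
      fun t => ⟪M₀ (deriv U t), U t⟫ * Real.exp (-2 * ν * t) +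
        ⟪M₁ (U t), U t⟫ * Real.exp (-2 * ν * t) := by
    ext t
    rw [inner_add_left, inner_add_left, hA, add_zero, add_mul]
  have hrhs : (fun t => ⟪(ν • M₀ + M₁) (U t), U t⟫ * Real.exp (-2 * ν * t)) =
      fun t => ν * (⟪M₀ (U t), U t⟫ * Real.exp (-2 * ν * t)) +
        ⟪M₁ (U t), U t⟫ * Real.exp (-2 * ν * t) := by
    ext t
    simp only [add_apply, smul_apply, inner_add_left, real_inner_smul_left]
    ring
  rw [hlhs, hrhs, integral_add hM₀U' hM₁U, integral_add (hM₀U.const_mul ν) hM₁U,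
    integral_const_mul, integral_inner_deriv_mul_exp hM₀ hU hUc]

end

theorem stmt_6_general {H : Type*} [NormedAddCommGroup H] [InnerProductSpace ℝ H]
    (M₀ M₁ A : H →L[ℝ] H)
    (hM₀sym : ∀ x y : H, ⟪M₀ x, y⟫ = ⟪x, M₀ y⟫)
    (hA : ∀ x : H, ⟪A x, x⟫ = 0)
    (ν γ : ℝ) (hγ : 0 < γ)
    (hcoer : ∀ x : H, γ * ‖x‖ ^ 2 ≤ ⟪(ν • M₀ + M₁) x, x⟫)
    (U : ℝ → H) (hU : ContDiff ℝ 1 U) (hUc : HasCompactSupport U)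
    (F : ℝ → H) (hF : ∀ t, F t = M₀ (deriv U t) + M₁ (U t) + A (U t)) :
    (∫ t : ℝ, ‖U t‖ ^ 2 * Real.exp (-2 * ν * t)) ≤
      γ⁻¹ ^ 2 * ∫ t : ℝ, ‖F t‖ ^ 2 * Real.exp (-2 * ν * t) := by
  obtain rfl : F = fun t => M₀ (deriv U t) + M₁ (U t) + A (U t) := funext hF
  have hUcont : Continuous U := hU.continuous
  have hU'cont : Continuous (deriv U) := hU.continuous_deriv le_rfl
  have hFc : HasCompactSupport fun t => M₀ (deriv U t) + M₁ (U t) + A (U t) :=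
    ((hUc.deriv.comp_left M₀.map_zero).add (hUc.comp_left M₁.map_zero)).add
      (hUc.comp_left A.map_zero)
  have hUi := integrable_mul_exp_of_hasCompactSupport (f := fun t => ‖U t‖ ^ 2) (by fun_prop)
    (hUc.comp_left (g := fun x => ‖x‖ ^ 2) (by simp)) (-2 * ν)
  have hFi := integrable_mul_exp_of_hasCompactSupport
    (f := fun t => ‖M₀ (deriv U t) + M₁ (U t) + A (U t)‖ ^ 2) (by fun_prop)
    (hFc.comp_left (g := fun x => ‖x‖ ^ 2) (by simp)) (-2 * ν)
  have hFUi := integrable_mul_exp_of_hasCompactSupport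
    (f := fun t => ⟪M₀ (deriv U t) + M₁ (U t) + A (U t), U t⟫) (by fun_prop)
    (hUc.inner_right _) (-2 * ν)
  have hTUi := integrable_mul_exp_of_hasCompactSupport
    (f := fun t => ⟪(ν • M₀ + M₁) (U t), U t⟫) (by fun_prop) (hUc.inner_right _) (-2 * ν)
  refine integral_norm_sq_mul_le_of_coercive (fun t => (Real.exp_pos _).le) hγ hUi hFi hFUi ?_
  rw [integral_inner_evolution_mul_exp hM₀sym hA hU hUc, ← integral_const_mul]
  refine integral_mono (hUi.const_mul γ) hTUi fun t => ?_
  simpa only [mul_assoc] using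
    mul_le_mul_of_nonneg_right (hcoer (U t)) (Real.exp_pos (-2 * ν * t)).le

/-- Exponentially weighted a priori stability estimate `‖U‖_ν ≤ γ⁻¹ ‖F‖_ν` for the
evolutionary equation `(∂ₜ M₀ + M₁ + A) U = F` of Picard's solution theory. -/
theorem stmt_6 {H : Type*} [NormedAddCommGroup H] [InnerProductSpace ℝ H] [CompleteSpace H]
    (M₀ M₁ A : H →L[ℝ] H)
    (hM₀sym : ∀ x y : H, ⟪M₀ x, y⟫ = ⟪x, M₀ y⟫)
    (hA : ∀ x : H, ⟪A x, x⟫ = 0)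
    (ν γ : ℝ) (hν : 0 < ν) (hγ : 0 < γ)
    (hcoer : ∀ x : H, γ * ‖x‖ ^ 2 ≤ ⟪(ν • M₀ + M₁) x, x⟫)
    (U : ℝ → H) (hU : ContDiff ℝ 1 U) (hUc : HasCompactSupport U)
    (F : ℝ → H) (hF : ∀ t, F t = M₀ (deriv U t) + M₁ (U t) + A (U t)) :
    (∫ t : ℝ, ‖U t‖ ^ 2 * Real.exp (-2 * ν * t)) ≤
      γ⁻¹ ^ 2 * ∫ t : ℝ, ‖F t‖ ^ 2 * Real.exp (-2 * ν * t) :=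
  stmt_6_general M₀ M₁ A hM₀sym hA ν γ hγ hcoer U hU hUc F hF
end

section
/- Let H be a real Hilbert space, let ν > 0, and let f : ℝ → H be continuously differentiable with ∫_ℝ (‖f(t)‖² + ‖f'(t)‖²) e^{−2νt} dt < ∞. Then for every t ∈ ℝ: e^{−2νt} ‖f(t)‖² ≤ ∫_ℝ ( ‖f'(s)‖² + (1 + 2ν) ‖f(s)‖² ) e^{−2νs} ds. -/
open MeasureTheory Set Filter RealInnerProductSpace

/-! Put `g s = e^{-2νs} ‖f s‖²`. Then `g` and `g'` are integrable, so `g → 0` at `+∞` and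
`g t = -∫_{s > t} g' s`. Pointwise, `-g' = (2ν‖f‖² - 2⟪f, f'⟫) e^{-2νs}` is bounded by the
integrand `(‖f'‖² + (1 + 2ν)‖f‖²) e^{-2νs}`, by Cauchy–Schwarz and `2ab ≤ a² + b²`. -/

theorem eq_neg_integral_Ioi_of_hasDerivAt {E : Type*} [NormedAddCommGroup E] [NormedSpace ℝ E]
    [CompleteSpace E] {g g' : ℝ → E} {a : ℝ} (hderiv : ∀ x ∈ Ici a, HasDerivAt g (g' x) x)
    (hg' : IntegrableOn g' (Ioi a)) (hg : IntegrableOn g (Ioi a)) :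
    g a = -∫ x in Ioi a, g' x := by
  have hlim : Tendsto g atTop (nhds 0) :=
    tendsto_zero_of_hasDerivAt_of_integrableOn_Ioi
      (fun x hx => hderiv x (Ioi_subset_Ici_self hx)) hg' hg
  rw [integral_Ioi_of_hasDerivAt_of_tendsto' hderiv hg' hlim, zero_sub, neg_neg]

section WeightedNorm

variable {H : Type*} [NormedAddCommGroup H] [InnerProductSpace ℝ H]

theorem abs_two_inner_sub_mul_norm_sq_le {ν : ℝ} (hν : 0 ≤ ν) (x y : H) :
    |2 * ⟪x, y⟫ - 2 * ν * ‖x‖ ^ 2| ≤ ‖y‖ ^ 2 + (1 + 2 * ν) * ‖x‖ ^ 2 := by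
  have hcs : |⟪x, y⟫| ≤ ‖x‖ * ‖y‖ := abs_real_inner_le_norm x y
  have hamgm : 2 * ‖x‖ * ‖y‖ ≤ ‖x‖ ^ 2 + ‖y‖ ^ 2 := two_mul_le_add_sq _ _
  have hx : 0 ≤ ν * ‖x‖ ^ 2 := by positivity
  rw [abs_le] at hcs ⊢
  constructor <;> nlinarith

theorem HasDerivAt.exp_mul_norm_sq (ν : ℝ) {f : ℝ → H} {f' : H} {s : ℝ}
    (hf : HasDerivAt f f' s) :
    HasDerivAt (fun s => Real.exp (-2 * ν * s) * ‖f s‖ ^ 2)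
      ((2 * ⟪f s, f'⟫ - 2 * ν * ‖f s‖ ^ 2) * Real.exp (-2 * ν * s)) s := by
  have hexp : HasDerivAt (fun s => Real.exp (-2 * ν * s)) (Real.exp (-2 * ν * s) * (-2 * ν)) s :=
    ((hasDerivAt_id s).const_mul (-2 * ν)).exp.congr_deriv (by simp)
  exact (hexp.mul hf.norm_sq).congr_deriv (by ring)

end WeightedNorm

theorem stmt_11_general {H : Type*} [NormedAddCommGroup H] [InnerProductSpace ℝ H]
    (ν : ℝ) (hν : 0 < ν) (f : ℝ → H) (hf : ContDiff ℝ 1 f)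
    (hint : Integrable (fun t : ℝ => (‖f t‖ ^ 2 + ‖deriv f t‖ ^ 2) * Real.exp (-2 * ν * t))) :
    ∀ t : ℝ, Real.exp (-2 * ν * t) * ‖f t‖ ^ 2 ≤
      ∫ s : ℝ, (‖deriv f s‖ ^ 2 + (1 + 2 * ν) * ‖f s‖ ^ 2) * Real.exp (-2 * ν * s) := by
  intro t
  have hd : Differentiable ℝ f := hf.differentiable one_ne_zero
  have hf'c : Continuous (deriv f) := hf.continuous_deriv le_rfl
  have hfc : Continuous f := hd.continuous
  set w : ℝ → ℝ := fun s => Real.exp (-2 * ν * s)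
  have hw : ∀ s, 0 < w s := fun s => Real.exp_pos _
  set F : ℝ → ℝ := fun s => (‖deriv f s‖ ^ 2 + (1 + 2 * ν) * ‖f s‖ ^ 2) * w s
  set G : ℝ → ℝ := fun s => (2 * ⟪f s, deriv f s⟫ - 2 * ν * ‖f s‖ ^ 2) * w s
  have hF : Integrable F := by
    refine (hint.const_mul (1 + 2 * ν)).mono' (by fun_prop) (Eventually.of_forall fun s => ?_)
    rw [Real.norm_of_nonneg (by positivity)]
    nlinarith [hw s, mul_pos hν (hw s), sq_nonneg ‖deriv f s‖, sq_nonneg ‖f s‖]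
  have hg : Integrable fun s => w s * ‖f s‖ ^ 2 := by
    refine hint.mono' (by fun_prop) (Eventually.of_forall fun s => ?_)
    rw [Real.norm_of_nonneg (by positivity)]
    nlinarith [hw s, sq_nonneg ‖deriv f s‖]
  have hGF : ∀ s, ‖G s‖ ≤ F s := fun s => by
    rw [Real.norm_eq_abs, abs_mul, abs_of_pos (hw s)]
    exact mul_le_mul_of_nonneg_right (abs_two_inner_sub_mul_norm_sq_le hν.le _ _) (hw s).le
  have hGc : Continuous G := by fun_prop
  have hG : Integrable G := hF.mono' hGc.aestronglyMeasurable (Eventually.of_forall hGF)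
  calc w t * ‖f t‖ ^ 2 = -∫ s in Ioi t, G s :=
        eq_neg_integral_Ioi_of_hasDerivAt (fun s _ => (hd s).hasDerivAt.exp_mul_norm_sq ν)
          hG.integrableOn hg.integrableOn
    _ = ∫ s in Ioi t, -G s := (integral_neg _).symm
    _ ≤ ∫ s in Ioi t, F s :=
        setIntegral_mono hG.neg.integrableOn hF.integrableOn
          fun s => (neg_le_abs _).trans (hGF s)
    _ ≤ ∫ s, F s :=
        setIntegral_le_integral hF (Eventually.of_forall fun s => (norm_nonneg _).trans (hGF s))

/-- Quantitative form of the Sobolev embedding `H¹_ν(ℝ;H) ↪ C_ν(ℝ;H)` of the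
exponentially weighted Bochner spaces. -/
theorem stmt_11 {H : Type*} [NormedAddCommGroup H] [InnerProductSpace ℝ H] [CompleteSpace H]
    (ν : ℝ) (hν : 0 < ν) (f : ℝ → H) (hf : ContDiff ℝ 1 f)
    (hint : Integrable (fun t : ℝ => (‖f t‖ ^ 2 + ‖deriv f t‖ ^ 2) * Real.exp (-2 * ν * t))) :
    ∀ t : ℝ, Real.exp (-2 * ν * t) * ‖f t‖ ^ 2 ≤
      ∫ s : ℝ, (‖deriv f s‖ ^ 2 + (1 + 2 * ν) * ‖f s‖ ^ 2) * Real.exp (-2 * ν * s) :=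
  stmt_11_general ν hν f hf hint
end
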